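/- arXiv:2203.13805 — 3 statements merged into one kernel-verified Lean document; each statement's English description precedes it below -/
import Mathlib

section
/- Pathwise Bessel comparison, integral form (from the proof of Lemma 2.1 of the paper): let T > 0, let d, d' ∈ ℝ with d ≤ d' and d' ≥ 1, let x > 0, and let B : [0,T] → ℝ be continuous. Let Z be a pathwise Bessel-type solution of dimension d and Z' a pathwise Bessel-type solution of dimension d', both driven by B with initial value x, and suppose Z_t ≤ Z'_t for all t ∈ [0,T]. Then 0 ≤ sup_{t ∈ [0,T]} (Z'_t − Z_t) ≤ ((d' − d)/2) · ∫_0^T Z_s^{-1} ds. -/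
/-!
Subtracting the two integral equations cancels `x` and `B`:
`Z' t - Z t = (d' - 1)/2 ∫_0^t (1/Z' - 1/Z) + (d' - d)/2 ∫_0^t 1/Z`.
The first term is `≤ 0` because `Z ≤ Z'` and `d' ≥ 1`, and the second is at most
`(d' - d)/2 ∫_0^T 1/Z`. The supremum is `≥ 0` because `Z' 0 = Z 0 = x + B 0`.
-/

open MeasureTheory intervalIntegral

def IsBesselSolution (T x d : ℝ) (B Z : ℝ → ℝ) : Prop :=
  ContinuousOn Z (Set.Icc 0 T) ∧ (∀ t ∈ Set.Icc 0 T, 0 < Z t) ∧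
    ∀ t ∈ Set.Icc 0 T, Z t = x + (d - 1) / 2 * (∫ s in (0 : ℝ)..t, (Z s)⁻¹) + B t

open Set

namespace IsBesselSolution

variable {T x d d' t : ℝ} {B Z Z' : ℝ → ℝ}

theorem continuousOn_inv (h : IsBesselSolution T x d B Z) :
    ContinuousOn (fun s => (Z s)⁻¹) (Icc 0 T) :=
  h.1.inv₀ fun s hs => (h.2.1 s hs).ne'

theorem intervalIntegrable_inv (h : IsBesselSolution T x d B Z) {a b : ℝ}
    (ha : a ∈ Icc 0 T) (hb : b ∈ Icc 0 T) :
    IntervalIntegrable (fun s => (Z s)⁻¹) volume a b :=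
  (h.continuousOn_inv.mono (uIcc_subset_Icc ha hb)).intervalIntegrable

theorem integral_inv_le_of_le (h : IsBesselSolution T x d B Z)
    (h' : IsBesselSolution T x d' B Z') (hle : ∀ t ∈ Icc 0 T, Z t ≤ Z' t)
    (ht : t ∈ Icc 0 T) :
    ∫ s in (0 : ℝ)..t, (Z' s)⁻¹ ≤ ∫ s in (0 : ℝ)..t, (Z s)⁻¹ := by
  have h0 : (0 : ℝ) ∈ Icc 0 T := ⟨le_rfl, ht.1.trans ht.2⟩
  refine integral_mono_on ht.1 (h'.intervalIntegrable_inv h0 ht)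
    (h.intervalIntegrable_inv h0 ht) fun s hs => ?_
  have hs' : s ∈ Icc 0 T := ⟨hs.1, hs.2.trans ht.2⟩
  exact inv_anti₀ (h.2.1 s hs') (hle s hs')

theorem integral_inv_le_of_mem_Icc (h : IsBesselSolution T x d B Z)
    (ht : t ∈ Icc 0 T) :
    ∫ s in (0 : ℝ)..t, (Z s)⁻¹ ≤ ∫ s in (0 : ℝ)..T, (Z s)⁻¹ := by
  have hT : 0 ≤ T := ht.1.trans ht.2
  refine integral_mono_interval le_rfl ht.1 ht.2 ?_
    (h.intervalIntegrable_inv ⟨le_rfl, hT⟩ ⟨hT, le_rfl⟩)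
  refine (ae_restrict_mem measurableSet_Ioc).mono fun s hs => ?_
  exact (inv_pos.mpr (h.2.1 s (Ioc_subset_Icc_self hs))).le

theorem sub_eq (h : IsBesselSolution T x d B Z) (h' : IsBesselSolution T x d' B Z')
    (ht : t ∈ Icc 0 T) :
    Z' t - Z t = (d' - 1) / 2 * ((∫ s in (0 : ℝ)..t, (Z' s)⁻¹) - ∫ s in (0 : ℝ)..t, (Z s)⁻¹)
      + (d' - d) / 2 * ∫ s in (0 : ℝ)..t, (Z s)⁻¹ := by
  rw [h.2.2 t ht, h'.2.2 t ht]
  ring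

theorem sub_le (h : IsBesselSolution T x d B Z) (h' : IsBesselSolution T x d' B Z')
    (hdd : d ≤ d') (hd' : 1 ≤ d') (hle : ∀ t ∈ Icc 0 T, Z t ≤ Z' t) (ht : t ∈ Icc 0 T) :
    Z' t - Z t ≤ (d' - d) / 2 * ∫ s in (0 : ℝ)..T, (Z s)⁻¹ := by
  have hdrift : (d' - 1) / 2 *
      ((∫ s in (0 : ℝ)..t, (Z' s)⁻¹) - ∫ s in (0 : ℝ)..t, (Z s)⁻¹) ≤ 0 :=
    mul_nonpos_of_nonneg_of_nonpos (by linarith)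
      (sub_nonpos.mpr (h.integral_inv_le_of_le h' hle ht))
  have hgap : (d' - d) / 2 * (∫ s in (0 : ℝ)..t, (Z s)⁻¹) ≤
      (d' - d) / 2 * ∫ s in (0 : ℝ)..T, (Z s)⁻¹ :=
    mul_le_mul_of_nonneg_left (h.integral_inv_le_of_mem_Icc ht) (by linarith)
  rw [h.sub_eq h' ht]
  linarith

theorem apply_zero (h : IsBesselSolution T x d B Z) (hT : 0 ≤ T) : Z 0 = x + B 0 := by
  simpa using h.2.2 0 ⟨le_rfl, hT⟩

end IsBesselSolution

theorem bessel_comparison_integral_general (T d d' x : ℝ) (hT : 0 < T) (hdd : d ≤ d') (hd' : 1 ≤ d')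
    (B Z Z' : ℝ → ℝ)
    (hZ : IsBesselSolution T x d B Z) (hZ' : IsBesselSolution T x d' B Z')
    (hle : ∀ t ∈ Set.Icc 0 T, Z t ≤ Z' t) :
    0 ≤ sSup ((fun t => Z' t - Z t) '' Set.Icc 0 T) ∧
      sSup ((fun t => Z' t - Z t) '' Set.Icc 0 T) ≤
        (d' - d) / 2 * ∫ s in (0 : ℝ)..T, (Z s)⁻¹ := by
  have hmem : (0 : ℝ) ∈ (fun t => Z' t - Z t) '' Icc 0 T :=
    ⟨0, ⟨le_rfl, hT.le⟩, by simp [hZ.apply_zero hT.le, hZ'.apply_zero hT.le]⟩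
  have hbound : ∀ y ∈ (fun t => Z' t - Z t) '' Icc 0 T,
      y ≤ (d' - d) / 2 * ∫ s in (0 : ℝ)..T, (Z s)⁻¹ := by
    rintro y ⟨t, ht, rfl⟩
    exact hZ.sub_le hZ' hdd hd' hle ht
  exact ⟨le_csSup ⟨_, hbound⟩ hmem, csSup_le ⟨0, hmem⟩ hbound⟩

/-- **Pathwise Bessel comparison, integral form** (from the proof of Lemma 2.1): if `d ≤ d'`,
`d' ≥ 1`, and `Z ≤ Z'` are Bessel-type solutions of dimensions `d`, `d'` driven by the same
continuous `B` with the same initial value `x > 0`, then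
`0 ≤ sup_{[0,T]} (Z' - Z) ≤ ((d'-d)/2) ∫_0^T Z_s⁻¹ ds`. -/
theorem bessel_comparison_integral (T d d' x : ℝ) (hT : 0 < T) (hdd : d ≤ d') (hd' : 1 ≤ d')
    (hx : 0 < x) (B Z Z' : ℝ → ℝ) (hB : ContinuousOn B (Set.Icc 0 T))
    (hZ : IsBesselSolution T x d B Z) (hZ' : IsBesselSolution T x d' B Z')
    (hle : ∀ t ∈ Set.Icc 0 T, Z t ≤ Z' t) :
    0 ≤ sSup ((fun t => Z' t - Z t) '' Set.Icc 0 T) ∧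
      sSup ((fun t => Z' t - Z t) '' Set.Icc 0 T) ≤
        (d' - d) / 2 * ∫ s in (0 : ℝ)..T, (Z s)⁻¹ :=
  bessel_comparison_integral_general T d d' x hT hdd hd' B Z Z' hZ hZ' hle
end

section
/- Binomial tail bound for adapted events with uniformly positive conditional probability (used in the proof of Lemma 4.5 of the paper): let (Ω, 𝒜, P) be a probability space, let ℱ_0 ⊆ ℱ_1 ⊆ ⋯ ⊆ ℱ_N ⊆ 𝒜 be a filtration, let p ∈ [0,1], and for each k ∈ {1, …, N} let A_k ∈ ℱ_k be an event such that P-almost surely the conditional probability of A_k given ℱ_{k−1} is at least p. Then for every integer m with 0 ≤ m ≤ N, P[∑_{k=1}^N 1_{A_k} ≤ m] ≤ ∑_{j=0}^m (N choose j) · p^j · (1 − p)^{N − j}. -/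
/-!
Let `S_n` be the number of events among `A_1, …, A_n` that occur. Since
`{S_{n+1} < m + 1} = {S_n < m} ∪ ({S_n < m + 1} \ A_{n+1})` and `A_{n+1}` has conditional
probability at least `p` on every `ℱ_n`-measurable event,
`P[S_{n+1} < m + 1] ≤ p P[S_n < m] + (1 - p) P[S_n < m + 1]`. Pascal's rule gives the same
recursion, with equality, for the binomial probabilities `P[Bin(n, p) < m]`, so
`P[S_n < m] ≤ P[Bin(n, p) < m]` by induction on `n`.
-/

open MeasureTheory

/-- `P[Bin(n, p) < m]` -/
noncomputable def binomialLowerTail (p : ℝ) (n m : ℕ) : ℝ :=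
  ∑ j ∈ Finset.range m, (n.choose j : ℝ) * p ^ j * (1 - p) ^ (n - j)

theorem choose_succ_succ_mul_pow_mul_pow (p : ℝ) (n j : ℕ) :
    ((n + 1).choose (j + 1) : ℝ) * p ^ (j + 1) * (1 - p) ^ (n + 1 - (j + 1)) =
      p * ((n.choose j : ℝ) * p ^ j * (1 - p) ^ (n - j)) +
        (1 - p) * ((n.choose (j + 1) : ℝ) * p ^ (j + 1) * (1 - p) ^ (n - (j + 1))) := by
  rcases lt_or_ge j n with hj | hj
  · obtain ⟨k, rfl⟩ := Nat.exists_eq_add_of_lt hj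
    rw [Nat.choose_succ_succ, show j + k + 1 + 1 - (j + 1) = k + 1 by omega,
      show j + k + 1 - j = k + 1 by omega, show j + k + 1 - (j + 1) = k by omega]
    push_cast
    ring
  · rw [Nat.choose_succ_succ, Nat.choose_eq_zero_of_lt (by omega : n < j + 1),
      show n + 1 - (j + 1) = n - j by omega]
    push_cast
    ring

theorem binomialLowerTail_succ_succ (p : ℝ) (n m : ℕ) :
    binomialLowerTail p (n + 1) (m + 1) =
      p * binomialLowerTail p n m + (1 - p) * binomialLowerTail p n (m + 1) := by
  simp only [binomialLowerTail, Finset.sum_range_succ' _ m, choose_succ_succ_mul_pow_mul_pow,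
    Finset.sum_add_distrib, ← Finset.mul_sum]
  simp only [Nat.choose_zero_right, Nat.cast_one, pow_zero, Nat.sub_zero, pow_succ]
  ring

theorem binomialLowerTail_zero_succ (p : ℝ) (m : ℕ) : binomialLowerTail p 0 (m + 1) = 1 := by
  simp [binomialLowerTail, Finset.sum_range_succ']

section ConditionalProbability

variable {Ω : Type*} {m m0 : MeasurableSpace Ω} {P : Measure Ω} [IsFiniteMeasure P]
  {A : Set Ω} {p : ℝ}

theorem le_measureReal_inter_of_le_condExp_indicator (hm : m ≤ m0) (hA : MeasurableSet A)
    {B : Set Ω} (hB : MeasurableSet[m] B)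
    (hp : ∀ᵐ ω ∂P, p ≤ P[A.indicator (fun _ => (1 : ℝ)) | m] ω) :
    p * P.real B ≤ P.real (B ∩ A) :=
  calc p * P.real B = ∫ _ in B, p ∂P := by rw [setIntegral_const, smul_eq_mul, mul_comm]
    _ ≤ ∫ ω in B, P[A.indicator (fun _ => (1 : ℝ)) | m] ω ∂P :=
      setIntegral_mono_ae integrableOn_const integrable_condExp.integrableOn hp
    _ = ∫ ω in B, A.indicator (fun _ => (1 : ℝ)) ω ∂P :=
      setIntegral_condExp hm ((integrable_const 1).indicator hA) hB
    _ = P.real (B ∩ A) := by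
      rw [integral_indicator_const _ hA, smul_eq_mul, mul_one, measureReal_restrict_apply hA,
        Set.inter_comm]

theorem measureReal_union_inter_compl_le (hm : m ≤ m0) (hA : MeasurableSet A) {T T' : Set Ω}
    (hT : MeasurableSet[m] T) (hT' : MeasurableSet[m] T') (hT'T : T' ⊆ T)
    (hp : ∀ᵐ ω ∂P, p ≤ P[A.indicator (fun _ => (1 : ℝ)) | m] ω) :
    P.real (T' ∪ T ∩ Aᶜ) ≤ p * P.real T' + (1 - p) * P.real T := by
  have hset : T' ∪ T ∩ Aᶜ = T \ ((T \ T') ∩ A) := by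
    ext ω
    have := @hT'T ω
    simp only [Set.mem_union, Set.mem_inter_iff, Set.mem_compl_iff, Set.mem_sdiff]
    tauto
  have hsdiff := le_measureReal_inter_of_le_condExp_indicator hm hA (hT.diff hT') hp
  rw [measureReal_sdiff hT'T (hm _ hT')] at hsdiff
  rw [hset, measureReal_sdiff (Set.inter_subset_left.trans Set.sdiff_subset)
    (((hm _ hT).diff (hm _ hT')).inter hA)]
  nlinarith

end ConditionalProbability

section EventCount

variable {Ω : Type*} (A : ℕ → Set Ω)

noncomputable def eventCount (n : ℕ) (ω : Ω) : ℕ :=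
  ∑ k ∈ Finset.Icc 1 n, (A k).indicator (fun _ => 1) ω

theorem eventCount_succ (n : ℕ) (ω : Ω) :
    eventCount A (n + 1) ω = eventCount A n ω + (A (n + 1)).indicator (fun _ => 1) ω :=
  Finset.sum_Icc_succ_top (Nat.le_add_left 1 n) _

theorem setOf_eventCount_succ_lt_succ (n m : ℕ) :
    {ω | eventCount A (n + 1) ω < m + 1} =
      {ω | eventCount A n ω < m} ∪ {ω | eventCount A n ω < m + 1} ∩ (A (n + 1))ᶜ := by
  ext ω
  simp only [Set.mem_union, Set.mem_inter_iff, Set.mem_compl_iff, Set.mem_ofPred_eq,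
    eventCount_succ]
  by_cases hω : ω ∈ A (n + 1) <;> grind [Set.indicator_of_mem, Set.indicator_of_notMem]

theorem cast_eventCount (n : ℕ) (ω : Ω) :
    (eventCount A n ω : ℝ) = ∑ k ∈ Finset.Icc 1 n, (A k).indicator (fun _ => (1 : ℝ)) ω := by
  rw [eventCount, Nat.cast_sum]
  exact Finset.sum_congr rfl fun k _ => by by_cases hω : ω ∈ A k <;> simp [hω]

variable {A}

theorem measurable_eventCount {m : MeasurableSpace Ω} {n : ℕ}
    (hA : ∀ k ∈ Finset.Icc 1 n, MeasurableSet (A k)) : Measurable (eventCount A n) :=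
  Finset.measurable_sum _ fun k hk => measurable_const.indicator (hA k hk)

end EventCount

theorem measureReal_eventCount_lt_le_binomialLowerTail {Ω : Type*} [m0 : MeasurableSpace Ω]
    {P : Measure Ω} [IsProbabilityMeasure P] {N : ℕ} {ℱ : ℕ → MeasurableSpace Ω}
    (hmono : ∀ i j, i ≤ j → j ≤ N → ℱ i ≤ ℱ j) (hle : ∀ k ≤ N, ℱ k ≤ m0)
    {p : ℝ} (hp : p ∈ Set.Icc (0 : ℝ) 1) {A : ℕ → Set Ω}
    (hA : ∀ k, 1 ≤ k → k ≤ N → MeasurableSet[ℱ k] (A k))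
    (hcond : ∀ k, 1 ≤ k → k ≤ N →
      ∀ᵐ ω ∂P, p ≤ (P[(A k).indicator (fun _ => (1 : ℝ)) | ℱ (k - 1)]) ω)
    {n : ℕ} (hn : n ≤ N) (m : ℕ) :
    P.real {ω | eventCount A n ω < m} ≤ binomialLowerTail p n m := by
  induction n generalizing m with
  | zero =>
    rcases m with _ | m
    · simp [binomialLowerTail]
    · exact binomialLowerTail_zero_succ p m ▸ measureReal_le_one
  | succ n ih =>
    rcases m with _ | m
    · simp [binomialLowerTail]
    have hA' : ∀ k ∈ Finset.Icc 1 n, MeasurableSet[ℱ n] (A k) := fun k hk => by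
      obtain ⟨hk1, hkn⟩ := Finset.mem_Icc.1 hk
      exact hmono k n hkn (by omega) _ (hA k hk1 (by omega))
    have hmeas (j : ℕ) : MeasurableSet[ℱ n] {ω | eventCount A n ω < j} :=
      measurable_eventCount hA' (MeasurableSet.of_discrete (s := Set.Iio j))
    calc P.real {ω | eventCount A (n + 1) ω < m + 1}
        ≤ p * P.real {ω | eventCount A n ω < m} +
            (1 - p) * P.real {ω | eventCount A n ω < m + 1} := by
          rw [setOf_eventCount_succ_lt_succ]
          exact measureReal_union_inter_compl_le (hle n (by omega))
            (hle (n + 1) hn _ (hA (n + 1) (by omega) hn)) (hmeas _) (hmeas _)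
            (fun ω (h : _ < m) => Nat.lt_succ_of_lt h) (hcond (n + 1) (by omega) hn)
      _ ≤ p * binomialLowerTail p n m + (1 - p) * binomialLowerTail p n (m + 1) :=
          add_le_add (mul_le_mul_of_nonneg_left (ih (by omega) m) hp.1)
            (mul_le_mul_of_nonneg_left (ih (by omega) (m + 1)) (sub_nonneg.2 hp.2))
      _ = binomialLowerTail p (n + 1) (m + 1) := (binomialLowerTail_succ_succ p n m).symm

/-- **Binomial tail bound for adapted events with uniformly positive conditional
probability** (used in the proof of Lemma 4.5): if `ℱ_0 ⊆ ⋯ ⊆ ℱ_N` is a filtration,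
`A_k ∈ ℱ_k` for `1 ≤ k ≤ N`, and a.s. `P[A_k | ℱ_{k-1}] ≥ p`, then for `0 ≤ m ≤ N`,
`P[∑_{k=1}^N 1_{A_k} ≤ m] ≤ ∑_{j=0}^m (N choose j) p^j (1-p)^{N-j}`. -/
theorem binomial_tail_bound_adapted {Ω : Type*} [m0 : MeasurableSpace Ω]
    (P : Measure Ω) [IsProbabilityMeasure P] (N : ℕ)
    (ℱ : ℕ → MeasurableSpace Ω)
    (hmono : ∀ i j, i ≤ j → j ≤ N → ℱ i ≤ ℱ j)
    (hle : ∀ k ≤ N, ℱ k ≤ m0)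
    (p : ℝ) (hp : p ∈ Set.Icc (0 : ℝ) 1)
    (A : ℕ → Set Ω) (hA : ∀ k, 1 ≤ k → k ≤ N → MeasurableSet[ℱ k] (A k))
    (hcond : ∀ k, 1 ≤ k → k ≤ N →
      ∀ᵐ ω ∂P, p ≤ (P[(A k).indicator (fun _ => (1 : ℝ)) | ℱ (k - 1)]) ω) :
    ∀ m : ℕ, m ≤ N →
      P {ω | ∑ k ∈ Finset.Icc 1 N, (A k).indicator (fun _ => (1 : ℝ)) ω ≤ (m : ℝ)} ≤
        ENNReal.ofReal
          (∑ j ∈ Finset.range (m + 1), (N.choose j : ℝ) * p ^ j * (1 - p) ^ (N - j)) := by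
  intro m _
  have hset : {ω | ∑ k ∈ Finset.Icc 1 N, (A k).indicator (fun _ => (1 : ℝ)) ω ≤ (m : ℝ)} =
      {ω | eventCount A N ω < m + 1} := by
    ext ω
    simp [← cast_eventCount]
  rw [hset, ← ofReal_measureReal]
  exact ENNReal.ofReal_le_ofReal
    (measureReal_eventCount_lt_le_binomialLowerTail hmono hle hp hA hcond le_rfl (m + 1))
end

section
/- Hölder-type modulus of continuity for area-parameterized curves that fill balls (the deterministic core of Proposition 5.1 of the paper): let R > 0, r ∈ (0,1), δ₀ ∈ (0,1], and let η : ℝ → ℂ be a continuous curve parameterized by Lebesgue measure. Assume that for every δ ∈ (0, δ₀] and all real numbers a < b such that η([a,b]) ⊆ B(0,R) and the diameter of η([a,b]) is at least δ^{1−r}, the set η([a,b]) contains an open ball of radius δ. Then for all real numbers a ≤ b with b − a ≤ π δ₀²/2 and η([a,b]) ⊆ B(0,R), one has |η(b) − η(a)| ≤ (2(b − a)/π)^{(1−r)/2}. -/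
/-!
If `|η b - η a|` exceeded `(2(b-a)/π)^{(1-r)/2} = δ^{1-r}` with `δ = √(2(b-a)/π) ≤ δ₀`, then
`η([a,b])` would have diameter at least `δ^{1-r}` and hence contain a ball of radius `δ`.
That ball has area `πδ² = 2(b-a)`, more than the area `b - a` of `η([a,b])`.
-/

open MeasureTheory

theorem Complex.pi_mul_sq_le_of_ball_subset {S : Set ℂ} {z : ℂ} {δ t : ℝ}
    (hS : volume S = ENNReal.ofReal t) (hball : Metric.ball z δ ⊆ S) (hδ : 0 ≤ δ) (ht : 0 ≤ t) :
    Real.pi * δ ^ 2 ≤ t := by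
  have hvol := measure_mono (μ := volume) hball
  rw [Complex.volume_ball, hS, ← ENNReal.ofReal_pow hδ, ← ENNReal.ofReal_coe_nnreal,
    ← ENNReal.ofReal_mul (by positivity), NNReal.coe_real_pi,
    ENNReal.ofReal_le_ofReal_iff ht] at hvol
  linarith

theorem norm_sub_le_diam_image_Icc {E : Type*} [SeminormedAddCommGroup E] {f : ℝ → E}
    {a b : ℝ} (hab : a ≤ b) (hf : Bornology.IsBounded (f '' Set.Icc a b)) :
    ‖f b - f a‖ ≤ Metric.diam (f '' Set.Icc a b) := by
  rw [← dist_eq_norm]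
  exact Metric.dist_le_diam_of_mem hf (Set.mem_image_of_mem f (Set.right_mem_Icc.2 hab))
    (Set.mem_image_of_mem f (Set.left_mem_Icc.2 hab))

theorem holder_modulus_of_ball_filling_general (R r δ₀ : ℝ) (hδ₀ : δ₀ ∈ Set.Ioc (0 : ℝ) 1)
    (η : ℝ → ℂ)
    (harea : ∀ a b : ℝ, a ≤ b → volume (η '' Set.Icc a b) = ENNReal.ofReal (b - a))
    (hfill : ∀ δ ∈ Set.Ioc (0 : ℝ) δ₀, ∀ a b : ℝ, a < b →
      η '' Set.Icc a b ⊆ Metric.ball (0 : ℂ) R →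
      δ ^ (1 - r) ≤ Metric.diam (η '' Set.Icc a b) →
      ∃ z : ℂ, Metric.ball z δ ⊆ η '' Set.Icc a b) :
    ∀ a b : ℝ, a ≤ b → b - a ≤ Real.pi * δ₀ ^ 2 / 2 →
      η '' Set.Icc a b ⊆ Metric.ball (0 : ℂ) R →
      ‖η b - η a‖ ≤ (2 * (b - a) / Real.pi) ^ ((1 - r) / 2) := by
  intro a b hab hlen hsub
  rcases hab.eq_or_lt with rfl | hlt
  · simpa using Real.rpow_nonneg (by positivity) _
  have hx : 0 < 2 * (b - a) / Real.pi := by have := sub_pos.2 hlt; positivity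
  set δ := √(2 * (b - a) / Real.pi) with hδdef
  have hδ : δ ∈ Set.Ioc 0 δ₀ := by
    refine ⟨Real.sqrt_pos.2 hx, Real.sqrt_le_iff.2 ⟨hδ₀.1.le, ?_⟩⟩
    rw [div_le_iff₀ Real.pi_pos]
    linarith
  by_contra! hfar
  have hdiam : δ ^ (1 - r) ≤ Metric.diam (η '' Set.Icc a b) :=
    calc δ ^ (1 - r) = (2 * (b - a) / Real.pi) ^ ((1 - r) / 2) := by
          rw [hδdef, Real.sqrt_eq_rpow, ← Real.rpow_mul hx.le]; ring_nf
      _ ≤ ‖η b - η a‖ := hfar.le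
      _ ≤ _ := norm_sub_le_diam_image_Icc hab (Metric.isBounded_ball.subset hsub)
  obtain ⟨z, hz⟩ := hfill δ hδ a b hlt hsub hdiam
  have hπδ := Complex.pi_mul_sq_le_of_ball_subset (harea a b hab) hz hδ.1.le
    (sub_nonneg.2 hab)
  have hδsq : δ ^ 2 = 2 * (b - a) / Real.pi := Real.sq_sqrt hx.le
  rw [hδsq, mul_div_cancel₀ _ Real.pi_ne_zero] at hπδ
  linarith

/-- **Hölder-type modulus of continuity for area-parameterized curves that fill balls**
(the deterministic core of Proposition 5.1): if `η : ℝ → ℂ` is a continuous curve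
parameterized by Lebesgue measure and for every `δ ∈ (0, δ₀]` each segment of `η` inside
`B(0,R)` whose diameter is at least `δ^{1-r}` contains a ball of radius `δ`, then for all
`a ≤ b` with `b - a ≤ π δ₀²/2` and `η([a,b]) ⊆ B(0,R)` we have
`|η b - η a| ≤ (2(b-a)/π)^{(1-r)/2}`. -/
theorem holder_modulus_of_ball_filling (R r δ₀ : ℝ) (hR : 0 < R)
    (hr : r ∈ Set.Ioo (0 : ℝ) 1) (hδ₀ : δ₀ ∈ Set.Ioc (0 : ℝ) 1)
    (η : ℝ → ℂ) (hcont : Continuous η)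
    (harea : ∀ a b : ℝ, a ≤ b → volume (η '' Set.Icc a b) = ENNReal.ofReal (b - a))
    (hfill : ∀ δ ∈ Set.Ioc (0 : ℝ) δ₀, ∀ a b : ℝ, a < b →
      η '' Set.Icc a b ⊆ Metric.ball (0 : ℂ) R →
      δ ^ (1 - r) ≤ Metric.diam (η '' Set.Icc a b) →
      ∃ z : ℂ, Metric.ball z δ ⊆ η '' Set.Icc a b) :
    ∀ a b : ℝ, a ≤ b → b - a ≤ Real.pi * δ₀ ^ 2 / 2 →
      η '' Set.Icc a b ⊆ Metric.ball (0 : ℂ) R →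
      ‖η b - η a‖ ≤ (2 * (b - a) / Real.pi) ^ ((1 - r) / 2) :=
  holder_modulus_of_ball_filling_general R r δ₀ hδ₀ η harea hfill
end
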